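/- arXiv:2508.21465 — 12 statements merged into one kernel-verified Lean document; each statement's English description precedes it below -/
import Mathlib

section
/- Let R be a right Bézout ring of stable range 2. Then for each pair (a,b) ∈ R², there exist d, a₁, b₁ ∈ R such that a = d·a₁, b = d·b₁, and a₁R + b₁R = R. -/
/-!
Take a right Bézout generator `d = a u + b v` of `aR + bR`, and write `a = d a₁`, `b = d b₁`.
Then `c = 1 - (a₁ u + b₁ v)` satisfies `d c = 0` and `a₁ R + b₁ R + c R = R`, so stable range 2
replaces `a₁, b₁` by a unimodular pair `a₁ + c l, b₁ + c m` without changing `d a₁, d b₁`.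
-/

section

variable {R : Type*} [Ring R]

theorem exists_factors_of_span_eq_span_singleton {a b d : R}
    (h : {x : R | ∃ u v : R, x = a * u + b * v} = {x : R | ∃ u : R, x = d * u}) :
    (∃ a₁, a = d * a₁) ∧ (∃ b₁, b = d * b₁) ∧ ∃ u v, d = a * u + b * v := by
  have mem_left : ∀ {x}, x ∈ {x : R | ∃ u v : R, x = a * u + b * v} → ∃ y, x = d * y := by
    intro x hx
    rwa [h] at hx
  refine ⟨mem_left ⟨1, 0, by simp⟩, mem_left ⟨0, 1, by simp⟩, ?_⟩
  have hd : d ∈ {x : R | ∃ u : R, x = d * u} := ⟨1, (mul_one d).symm⟩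
  rwa [← h] at hd

theorem mul_one_sub_eq_zero_of_eq_mul_add_mul {d a₁ b₁ u v : R}
    (hd : d = d * a₁ * u + d * b₁ * v) : d * (1 - (a₁ * u + b₁ * v)) = 0 := by
  rw [mul_sub, mul_one, mul_add, ← mul_assoc, ← mul_assoc, ← hd, sub_self]

theorem mul_add_mul_of_mul_eq_zero {d c : R} (hdc : d * c = 0) (x l : R) :
    d * (x + c * l) = d * x := by
  rw [mul_add, ← mul_assoc, hdc, zero_mul, add_zero]

end

theorem stmt_0_general {R : Type*} [Ring R]
    (hBez : ∀ a b : R, ∃ d : R,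
      {x : R | ∃ u v : R, x = a * u + b * v} = {x : R | ∃ u : R, x = d * u})
    (hSR2 : ∀ a b c : R, (∃ u v w : R, a * u + b * v + c * w = 1) →
      ∃ l m : R, ∃ u v : R, (a + c * l) * u + (b + c * m) * v = 1)
    (a b : R) :
    ∃ d a₁ b₁ : R, a = d * a₁ ∧ b = d * b₁ ∧ ∃ u v : R, a₁ * u + b₁ * v = 1 := by
  obtain ⟨d, hd⟩ := hBez a b
  obtain ⟨⟨a₁, rfl⟩, ⟨b₁, rfl⟩, u, v, hd_comb⟩ := exists_factors_of_span_eq_span_singleton hd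
  set c := 1 - (a₁ * u + b₁ * v)
  have hdc : d * c = 0 := mul_one_sub_eq_zero_of_eq_mul_add_mul hd_comb
  have hunimod : a₁ * u + b₁ * v + c * 1 = 1 := by simp [c]
  obtain ⟨l, m, u', v', h⟩ := hSR2 a₁ b₁ c ⟨u, v, 1, hunimod⟩
  exact ⟨d, a₁ + c * l, b₁ + c * m, (mul_add_mul_of_mul_eq_zero hdc a₁ l).symm,
    (mul_add_mul_of_mul_eq_zero hdc b₁ m).symm, u', v', h⟩

/-- Lemma 1: In a right Bézout ring of stable range 2, every pair has a
"common divisor" presentation `a = d*a₁`, `b = d*b₁` with `a₁R + b₁R = R`. -/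
theorem stmt_0 {R : Type*} [Ring R] [Nontrivial R]
    (hBez : ∀ a b : R, ∃ d : R,
      {x : R | ∃ u v : R, x = a * u + b * v} = {x : R | ∃ u : R, x = d * u})
    (hSR2 : ∀ a b c : R, (∃ u v w : R, a * u + b * v + c * w = 1) →
      ∃ l m : R, ∃ u v : R, (a + c * l) * u + (b + c * m) * v = 1)
    (a b : R) :
    ∃ d a₁ b₁ : R, a = d * a₁ ∧ b = d * b₁ ∧ ∃ u v : R, a₁ * u + b₁ * v = 1 :=
  stmt_0_general hBez hSR2 a b
end

section
/- Every right Bézout ring of stable range 1 is a ring of right almost stable range 1. -/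
/-!
Let `dR = aR + cR`. Since `a, c ∈ dR`, the comaximality `aR + bR + cR = R` gives `bR + dR = R`,
so stable range 1 yields `l` with `b + d l` right invertible. Writing `d = a p + c q`, we get
`b + d l = a (p l) + (b + c (q l))`, hence `aR + (b + c (q l))R = R`.
-/

section

variable {R : Type*} [Ring R]

theorem exists_eq_mul_add_mul_and_dvd_of_span_eq {a c d : R}
    (hd : {x : R | ∃ u v : R, x = a * u + c * v} = {x : R | ∃ u : R, x = d * u}) :
    (∃ p q : R, d = a * p + c * q) ∧ (∃ a₀ : R, a = d * a₀) ∧ ∃ c₀ : R, c = d * c₀ := by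
  have hd' : ∀ x : R, (∃ u v : R, x = a * u + c * v) ↔ ∃ u : R, x = d * u :=
    fun x => Set.ext_iff.mp hd x
  refine ⟨(hd' d).mpr ⟨1, (mul_one d).symm⟩, (hd' a).mp ⟨1, 0, ?_⟩, (hd' c).mp ⟨0, 1, ?_⟩⟩ <;>
    noncomm_ring

theorem exists_mul_add_mul_eq_one_of_eq_mul {a b c d a₀ c₀ : R} (ha : a = d * a₀)
    (hc : c = d * c₀) (h : ∃ u v w : R, a * u + b * v + c * w = 1) :
    ∃ s t : R, b * s + d * t = 1 := by
  obtain ⟨u, v, w, huvw⟩ := h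
  refine ⟨v, a₀ * u + c₀ * w, ?_⟩
  rw [← huvw, ha, hc]
  noncomm_ring

theorem mul_add_add_mul_mul_eq_one {a b c p q l e : R} (h : (b + (a * p + c * q) * l) * e = 1) :
    a * (p * l * e) + (b + c * (q * l)) * e = 1 := by
  rw [← h]
  noncomm_ring

end

theorem stmt_1_general {R : Type*} [Ring R]
    (hBez : ∀ a b : R, ∃ d : R,
      {x : R | ∃ u v : R, x = a * u + b * v} = {x : R | ∃ u : R, x = d * u})
    (hSR1 : ∀ a b : R, (∃ u v : R, a * u + b * v = 1) →
      ∃ l : R, ∃ u : R, (a + b * l) * u = 1) :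
    ∀ a : R, a ≠ 0 → ∀ b c : R, (∃ u v w : R, a * u + b * v + c * w = 1) →
      ∃ l : R, ∃ u v : R, a * u + (b + c * l) * v = 1 := by
  intro a _ b c habc
  obtain ⟨d, hd⟩ := hBez a c
  obtain ⟨⟨p, q, rfl⟩, ⟨a₀, ha⟩, ⟨c₀, hc⟩⟩ := exists_eq_mul_add_mul_and_dvd_of_span_eq hd
  obtain ⟨l, e, hle⟩ := hSR1 b _ (exists_mul_add_mul_eq_one_of_eq_mul ha hc habc)
  exact ⟨q * l, p * l * e, e, mul_add_add_mul_mul_eq_one hle⟩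

/-- Every right Bézout ring of stable range 1 is a ring of right almost stable
range 1: every nonzero element is an element of right almost stable range 1. -/
theorem stmt_1 {R : Type*} [Ring R] [Nontrivial R]
    (hBez : ∀ a b : R, ∃ d : R,
      {x : R | ∃ u v : R, x = a * u + b * v} = {x : R | ∃ u : R, x = d * u})
    (hSR1 : ∀ a b : R, (∃ u v : R, a * u + b * v = 1) →
      ∃ l : R, ∃ u : R, (a + b * l) * u = 1) :
    ∀ a : R, a ≠ 0 → ∀ b c : R, (∃ u v w : R, a * u + b * v + c * w = 1) →
      ∃ l : R, ∃ u v : R, a * u + (b + c * l) * v = 1 :=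
  stmt_1_general hBez hSR1
end

section
/- Let R be a right Bézout ring. If for each pair (a,b) ∈ R² with aR + bR = R there exists λ ∈ R such that a + bλ is an element of right almost stable range 1, then R has stable range 2. -/
/-!
Given `aR + bR + cR = R`, write `bR + cR = dR` with `d = b u₀ + c v₀`. Then `aR + dR = R`, so some
`a + dλ` has right almost stable range 1; as `(a + dλ)R + bR + cR = R`, there is `μ` with
`(a + dλ)R + (b + cμ)R = R`. Finally `a + dλ = (a + c(v₀λ - μu₀λ)) + (b + cμ)u₀λ`, and adding a right
multiple of one generator to the other does not change the right ideal they generate.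
-/

section

variable {R : Type*} [Ring R]

theorem exists_add_mul_mul_add_mul_eq_one_iff (a b s : R) :
    (∃ u v : R, (a + b * s) * u + b * v = 1) ↔ ∃ u v : R, a * u + b * v = 1 := by
  constructor
  · rintro ⟨u, v, h⟩
    exact ⟨u, s * u + v, by rw [← h]; noncomm_ring⟩
  · rintro ⟨u, v, h⟩
    exact ⟨u, v - s * u, by rw [← h]; noncomm_ring⟩

theorem exists_triple_eq_one_iff_exists_pair_eq_one {a b c d : R}
    (hd : {x : R | ∃ u v : R, x = b * u + c * v} = {x : R | ∃ u : R, x = d * u}) :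
    (∃ u v w : R, a * u + b * v + c * w = 1) ↔ ∃ u r : R, a * u + d * r = 1 := by
  constructor
  · rintro ⟨u, v, w, h⟩
    have hmem : b * v + c * w ∈ {x : R | ∃ u : R, x = d * u} := hd ▸ ⟨v, w, rfl⟩
    obtain ⟨r, hr⟩ := hmem
    exact ⟨u, r, by rw [← hr, ← add_assoc, h]⟩
  · rintro ⟨u, r, h⟩
    have hmem : d * r ∈ {x : R | ∃ u v : R, x = b * u + c * v} := hd ▸ ⟨r, rfl⟩
    obtain ⟨v, w, hvw⟩ := hmem
    exact ⟨u, v, w, by rw [add_assoc, ← hvw, h]⟩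

end

theorem stmt_4_general {R : Type*} [Ring R]
    (hBez : ∀ a b : R, ∃ d : R,
      {x : R | ∃ u v : R, x = a * u + b * v} = {x : R | ∃ u : R, x = d * u})
    (hyp : ∀ a b : R, (∃ u v : R, a * u + b * v = 1) →
      ∃ l : R, a + b * l ≠ 0 ∧
        ∀ b' c' : R, (∃ u v w : R, (a + b * l) * u + b' * v + c' * w = 1) →
          ∃ m : R, ∃ u v : R, (a + b * l) * u + (b' + c' * m) * v = 1) :
    ∀ a b c : R, (∃ u v w : R, a * u + b * v + c * w = 1) →
      ∃ l m : R, ∃ u v : R, (a + c * l) * u + (b + c * m) * v = 1 := by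
  intro a b c habc
  obtain ⟨d, hd⟩ := hBez b c
  have hd_mem : d ∈ {x : R | ∃ u v : R, x = b * u + c * v} := hd ▸ ⟨1, (mul_one d).symm⟩
  obtain ⟨u₀, v₀, hd₀⟩ := hd_mem
  have had := (exists_triple_eq_one_iff_exists_pair_eq_one hd).1 habc
  obtain ⟨l, -, hl⟩ := hyp a d had
  obtain ⟨m, hm⟩ := hl b c <| (exists_triple_eq_one_iff_exists_pair_eq_one hd).2 <|
    (exists_add_mul_mul_add_mul_eq_one_iff a d l).2 had
  refine ⟨v₀ * l - m * (u₀ * l), m, (exists_add_mul_mul_add_mul_eq_one_iff _ _ (u₀ * l)).1 ?_⟩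
  have hshift : a + c * (v₀ * l - m * (u₀ * l)) + (b + c * m) * (u₀ * l) = a + d * l := by
    rw [hd₀]; noncomm_ring
  rwa [hshift]

/-- If in a right Bézout ring every unimodular pair `(a,b)` can be completed
to an element `a + bλ` of right almost stable range 1, then the ring has
stable range 2. -/
theorem stmt_4 {R : Type*} [Ring R] [Nontrivial R]
    (hBez : ∀ a b : R, ∃ d : R,
      {x : R | ∃ u v : R, x = a * u + b * v} = {x : R | ∃ u : R, x = d * u})
    (hyp : ∀ a b : R, (∃ u v : R, a * u + b * v = 1) →
      ∃ l : R, a + b * l ≠ 0 ∧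
        ∀ b' c' : R, (∃ u v w : R, (a + b * l) * u + b' * v + c' * w = 1) →
          ∃ m : R, ∃ u v : R, (a + b * l) * u + (b' + c' * m) * v = 1) :
    ∀ a b c : R, (∃ u v w : R, a * u + b * v + c * w = 1) →
      ∃ l m : R, ∃ u v : R, (a + c * l) * u + (b + c * m) * v = 1 :=
  stmt_4_general hBez hyp
end

section
/- Let R be a commutative ring. If every proper homomorphic image of R has stable range 1, then for every triple (a,b,c) ∈ R³ with a ≠ 0 and aR + bR + cR = R, there exists λ ∈ R such that aR + (b + cλ)R = R. -/
namespace Ideal.Quotient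

variable {R : Type*} [CommRing R]

theorem isUnit_mk_span_singleton_iff {a x : R} :
    IsUnit (mk (span {a}) x) ↔ ∃ u v : R, a * u + x * v = 1 := by
  constructor
  · intro hx
    obtain ⟨s, hs⟩ := hx.exists_right_inv
    obtain ⟨v, rfl⟩ := mk_surjective s
    rw [← map_mul, ← map_one (mk _), Ideal.Quotient.eq, mem_span_singleton] at hs
    obtain ⟨d, hd⟩ := hs
    exact ⟨-d, v, by linear_combination hd⟩
  · rintro ⟨u, v, huv⟩
    refine IsUnit.of_mul_eq_one (mk _ v) ?_
    rw [← map_mul, ← map_one (mk _), Ideal.Quotient.eq, mem_span_singleton]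
    exact ⟨-u, by linear_combination huv⟩

theorem mk_span_singleton_mul_add_mul_eq_one {a b c u v w : R}
    (h : a * u + b * v + c * w = 1) :
    mk (span {a}) b * mk (span {a}) v + mk (span {a}) c * mk (span {a}) w = 1 := by
  have ha : mk (span {a}) a = 0 := eq_zero_iff_mem.mpr (mem_span_singleton_self a)
  simpa only [map_add, map_mul, map_one, ha, zero_mul, zero_add] using congrArg (mk (span {a})) h

end Ideal.Quotient

theorem stmt_5_general {R : Type*} [CommRing R]
    (h : ∀ I : Ideal R, I ≠ ⊥ →
      ∀ x y : R ⧸ I, (∃ u v : R ⧸ I, x * u + y * v = 1) →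
        ∃ t : R ⧸ I, IsUnit (x + y * t)) :
    ∀ a b c : R, a ≠ 0 → (∃ u v w : R, a * u + b * v + c * w = 1) →
      ∃ l : R, ∃ u v : R, a * u + (b + c * l) * v = 1 := by
  intro a b c ha ⟨u, v, w, huvw⟩
  open Ideal Ideal.Quotient in
  obtain ⟨t, ht⟩ := h (span {a}) (by rwa [Ne, span_singleton_eq_bot])
    (mk _ b) (mk _ c) ⟨_, _, mk_span_singleton_mul_add_mul_eq_one huvw⟩
  obtain ⟨l, rfl⟩ := Ideal.Quotient.mk_surjective t
  rw [← map_mul, ← map_add] at ht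
  exact ⟨l, Ideal.Quotient.isUnit_mk_span_singleton_iff.mp ht⟩

/-- If every proper homomorphic image of a commutative ring `R` has stable
range 1, then for every triple `(a,b,c)` with `a ≠ 0` and `aR + bR + cR = R`
there exists `λ` with `aR + (b + cλ)R = R`. -/
theorem stmt_5 {R : Type*} [CommRing R] [Nontrivial R]
    (h : ∀ I : Ideal R, I ≠ ⊥ →
      ∀ x y : R ⧸ I, (∃ u v : R ⧸ I, x * u + y * v = 1) →
        ∃ t : R ⧸ I, IsUnit (x + y * t)) :
    ∀ a b c : R, a ≠ 0 → (∃ u v w : R, a * u + b * v + c * w = 1) →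
      ∃ l : R, ∃ u v : R, a * u + (b + c * l) * v = 1 :=
  stmt_5_general h
end

section
/- Let R be a commutative ring. If for every triple (a,b,c) ∈ R³ with a ≠ 0 and aR + bR + cR = R there exists λ ∈ R such that aR + (b + cλ)R = R, then for every nonzero ideal I of R the quotient R/I has stable range 1. -/
namespace Ideal

variable {R : Type*} [CommRing R]

/-- If `1 - s` itself vanishes, any nonzero element of `I` works, with coefficient `0`. -/
theorem exists_ne_zero_mem_mul_add_eq_one_of_one_sub_mem {I : Ideal R} (hI : I ≠ ⊥) {s : R}
    (hs : 1 - s ∈ I) : ∃ a ∈ I, a ≠ 0 ∧ ∃ w, a * w + s = 1 := by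
  by_cases hs0 : 1 - s = 0
  · obtain ⟨a, haI, ha0⟩ := Submodule.exists_mem_ne_zero_of_ne_bot hI
    exact ⟨a, haI, ha0, 0, by rw [mul_zero, zero_add, ← sub_eq_zero.mp hs0]⟩
  · exact ⟨1 - s, hs, hs0, 1, by ring⟩

theorem Quotient.isUnit_mk_of_mul_add_mul_eq_one {I : Ideal R} {a z u v : R} (ha : a ∈ I)
    (h : a * u + z * v = 1) : IsUnit (Quotient.mk I z) := by
  refine IsUnit.of_mul_eq_one (Quotient.mk I v) ?_
  rw [← map_mul, ← map_one (Quotient.mk I), Quotient.eq, ← h]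
  simpa using I.mul_mem_right u ha

end Ideal

open Ideal.Quotient in
theorem stmt_6_general {R : Type*} [CommRing R]
    (h : ∀ a b c : R, a ≠ 0 → (∃ u v w : R, a * u + b * v + c * w = 1) →
      ∃ l : R, ∃ u v : R, a * u + (b + c * l) * v = 1) :
    ∀ I : Ideal R, I ≠ ⊥ →
      ∀ x y : R ⧸ I, (∃ u v : R ⧸ I, x * u + y * v = 1) →
        ∃ t : R ⧸ I, IsUnit (x + y * t) := by
  intro I hI x y ⟨u, v, huv⟩
  obtain ⟨b, rfl⟩ := mk_surjective x
  obtain ⟨c, rfl⟩ := mk_surjective y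
  obtain ⟨u, rfl⟩ := mk_surjective u
  obtain ⟨v, rfl⟩ := mk_surjective v
  have hmem : 1 - (b * u + c * v) ∈ I := by
    rw [← eq_zero_iff_mem, map_sub, map_one, map_add, map_mul, map_mul, huv, sub_self]
  obtain ⟨a, haI, ha0, w, hw⟩ := Ideal.exists_ne_zero_mem_mul_add_eq_one_of_one_sub_mem hI hmem
  obtain ⟨l, u', v', hl⟩ := h a b c ha0 ⟨w, u, v, by rw [← hw, add_assoc]⟩
  exact ⟨mk I l, by simpa using Ideal.Quotient.isUnit_mk_of_mul_add_mul_eq_one haI hl⟩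

/-- If in a commutative ring `R` for every triple `(a,b,c)` with `a ≠ 0` and
`aR + bR + cR = R` there exists `λ` with `aR + (b + cλ)R = R`, then every
proper homomorphic image `R/I` (`I ≠ ⊥`) has stable range 1. -/
theorem stmt_6 {R : Type*} [CommRing R] [Nontrivial R]
    (h : ∀ a b c : R, a ≠ 0 → (∃ u v w : R, a * u + b * v + c * w = 1) →
      ∃ l : R, ∃ u v : R, a * u + (b + c * l) * v = 1) :
    ∀ I : Ideal R, I ≠ ⊥ →
      ∀ x y : R ⧸ I, (∃ u v : R ⧸ I, x * u + y * v = 1) →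
        ∃ t : R ⧸ I, IsUnit (x + y * t) :=
  stmt_6_general h
end

section
/- Let R be a commutative Bézout ring and let a ∈ R \ {0}. Suppose that for every pair (b,c) ∈ R² with aR + bR + cR = R there exists a factorization a = r·s with rR + bR = R, sR + cR = R, and rR + sR = R. Then R/aR is a clean ring. -/
/-!
Given `x`, apply the factorization hypothesis to the pair `(x, x - 1)`: this yields comaximal
`r, s` with `a = r * s`, `x` coprime to `r` and `x - 1` coprime to `s`. Writing `u * r + v * s = 1`,
the element `e = u * r` is idempotent modulo `r * s`, and `x - e` is congruent to `x` modulo `r` and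
to `x - 1` modulo `s`, hence coprime to `r * s` and a unit modulo `a`.
-/

open Ideal.Quotient

theorem isUnit_mk_span_singleton_of_isCoprime {R : Type*} [CommRing R] {t a : R}
    (h : IsCoprime t a) : IsUnit (mk (Ideal.span {a}) t) := by
  obtain ⟨u, v, huv⟩ := h
  refine .of_mul_eq_one (mk _ u) ?_
  rw [← map_mul, ← map_one (mk _), Ideal.Quotient.eq, Ideal.mem_span_singleton]
  exact ⟨-v, by linear_combination huv⟩

theorem isIdempotentElem_mk_span_singleton_mul {R : Type*} [CommRing R] {r s u v : R}
    (h : u * r + v * s = 1) : IsIdempotentElem (mk (Ideal.span {r * s}) (u * r)) := by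
  rw [IsIdempotentElem, ← map_mul, Ideal.Quotient.eq, Ideal.mem_span_singleton]
  exact ⟨-(u * v), by linear_combination (u * r) * h⟩

theorem isCoprime_sub_mul_mul_of_add_eq_one {R : Type*} [CommRing R] {r s u v x : R}
    (h : u * r + v * s = 1) (hr : IsCoprime x r) (hs : IsCoprime (x - 1) s) :
    IsCoprime (x - u * r) (r * s) := by
  have hr' : IsCoprime (x - u * r) r := by
    rw [sub_eq_add_neg, ← neg_mul]
    exact IsCoprime.add_mul_right_left_iff.mpr hr
  have hs' : IsCoprime (x - u * r) s := by
    have : x - u * r = x - 1 + v * s := by linear_combination -h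
    rwa [this, IsCoprime.add_mul_right_left_iff]
  exact hr'.mul_right hs'

theorem exists_isUnit_isIdempotentElem_mk_eq_add {R : Type*} [CommRing R] {r s x : R}
    (hrs : IsCoprime r s) (hr : IsCoprime x r) (hs : IsCoprime (x - 1) s) :
    ∃ u e : R ⧸ Ideal.span {r * s}, IsUnit u ∧ IsIdempotentElem e ∧ mk _ x = u + e := by
  obtain ⟨u, v, huv⟩ := hrs
  refine ⟨mk _ (x - u * r), mk _ (u * r),
    isUnit_mk_span_singleton_of_isCoprime (isCoprime_sub_mul_mul_of_add_eq_one huv hr hs),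
    isIdempotentElem_mk_span_singleton_mul huv, ?_⟩
  rw [← map_add, sub_add_cancel]

theorem stmt_7_general {R : Type*} [CommRing R]
    (a : R)
    (hfac : ∀ b c : R, (∃ u v w : R, a * u + b * v + c * w = 1) →
      ∃ r s : R, a = r * s ∧ (∃ u v : R, r * u + b * v = 1) ∧
        (∃ u v : R, s * u + c * v = 1) ∧ (∃ u v : R, r * u + s * v = 1)) :
    ∀ x : R ⧸ Ideal.span {a}, ∃ u e : R ⧸ Ideal.span {a},
      IsUnit u ∧ IsIdempotentElem e ∧ x = u + e := by
  intro xbar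
  obtain ⟨x, rfl⟩ := mk_surjective xbar
  obtain ⟨r, s, rfl, ⟨u₁, v₁, hr⟩, ⟨u₂, v₂, hs⟩, ⟨u₃, v₃, hrs⟩⟩ :=
    hfac x (x - 1) ⟨0, 1, -1, by ring⟩
  exact exists_isUnit_isIdempotentElem_mk_eq_add ⟨u₃, v₃, by linear_combination hrs⟩
    ⟨v₁, u₁, by linear_combination hr⟩ ⟨v₂, u₂, by linear_combination hs⟩

/-- Theorem 5: in a commutative Bézout ring, if a nonzero element `a` admits,
for every pair `(b,c)` with `aR + bR + cR = R`, a factorization `a = r*s` with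
`rR + bR = R`, `sR + cR = R` and `rR + sR = R`, then `R/aR` is a clean ring. -/
theorem stmt_7 {R : Type*} [CommRing R] [Nontrivial R]
    (hBez : ∀ x y : R, ∃ d : R, Ideal.span {x, y} = Ideal.span {d})
    (a : R) (ha : a ≠ 0)
    (hfac : ∀ b c : R, (∃ u v w : R, a * u + b * v + c * w = 1) →
      ∃ r s : R, a = r * s ∧ (∃ u v : R, r * u + b * v = 1) ∧
        (∃ u v : R, s * u + c * v = 1) ∧ (∃ u v : R, r * u + s * v = 1)) :
    ∀ x : R ⧸ Ideal.span {a}, ∃ u e : R ⧸ Ideal.span {a},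
      IsUnit u ∧ IsIdempotentElem e ∧ x = u + e :=
  stmt_7_general a hfac
end

section
/- Let R be a commutative Bézout ring, a ∈ R \ {0}, and suppose aR + bR + cR = R and a = rs with rR + bR = R, sR + cR = R, and rR + sR = R. Then in R̄ = R/aR there exists an idempotent ē ∈ R̄ such that ē ∈ b̄R̄ and 1̄ − ē ∈ c̄R̄. -/
/-!
With `r * u + s * v = 1`, the element `e = s * v` is the Chinese-remainder idempotent of
`R / (r s) ≅ R / (r) × R / (s)`: it is `0` modulo `s` and `1` modulo `r`, and `1 - e = r * u`.
Since `b` is a unit modulo `r`, every multiple of `s` lies in `b R + r s R`; symmetrically every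
multiple of `r` lies in `c R + r s R`.
-/

open Ideal

section

variable {R : Type*} [CommRing R]

theorem isIdempotentElem_mk_span_mul {r s u v : R} (h : r * u + s * v = 1) :
    IsIdempotentElem (Ideal.Quotient.mk (span {r * s}) (s * v)) := by
  rw [IsIdempotentElem, ← map_mul, Ideal.Quotient.eq, mem_span_singleton]
  exact ⟨-(u * v), by linear_combination (s * v) * h⟩

theorem exists_mk_span_mul_eq_mk_mul {r s b u v : R} (h : r * u + b * v = 1) (x : R) :
    ∃ y, Ideal.Quotient.mk (span {r * s}) (s * x) = Ideal.Quotient.mk _ b * y := by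
  refine ⟨Ideal.Quotient.mk _ (v * s * x), ?_⟩
  rw [← map_mul, Ideal.Quotient.eq, mem_span_singleton]
  exact ⟨u * x, by linear_combination -(s * x) * h⟩

end

theorem stmt_8_general {R : Type*} [CommRing R]
    (a b c r s : R)
    (hrs : a = r * s)
    (hrb : ∃ u v : R, r * u + b * v = 1)
    (hsc : ∃ u v : R, s * u + c * v = 1)
    (hrsu : ∃ u v : R, r * u + s * v = 1) :
    ∃ e : R ⧸ Ideal.span {a}, IsIdempotentElem e ∧
      (∃ x : R ⧸ Ideal.span {a}, e = Ideal.Quotient.mk (Ideal.span {a}) b * x) ∧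
      (∃ y : R ⧸ Ideal.span {a}, 1 - e = Ideal.Quotient.mk (Ideal.span {a}) c * y) := by
  obtain ⟨u, v, huv⟩ := hrsu
  obtain ⟨u₁, v₁, hrb⟩ := hrb
  obtain ⟨u₂, v₂, hsc⟩ := hsc
  subst hrs
  have one_sub : 1 - Ideal.Quotient.mk (span {r * s}) (s * v) =
      Ideal.Quotient.mk _ (r * u) := by
    rw [← map_one (Ideal.Quotient.mk _), ← huv, map_add]
    ring
  refine ⟨_, isIdempotentElem_mk_span_mul huv, exists_mk_span_mul_eq_mk_mul hrb v, ?_⟩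
  rw [one_sub, mul_comm r s]
  exact exists_mk_span_mul_eq_mk_mul hsc u

/-- In a commutative Bézout ring, if `a ≠ 0`, `aR + bR + cR = R` and `a = r*s`
with `rR + bR = R`, `sR + cR = R`, `rR + sR = R`, then in `R̄ = R/aR` there is
an idempotent `ē ∈ b̄R̄` with `1̄ - ē ∈ c̄R̄`. -/
theorem stmt_8 {R : Type*} [CommRing R] [Nontrivial R]
    (hBez : ∀ x y : R, ∃ d : R, Ideal.span {x, y} = Ideal.span {d})
    (a b c r s : R) (ha : a ≠ 0)
    (hu : ∃ u v w : R, a * u + b * v + c * w = 1)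
    (hrs : a = r * s)
    (hrb : ∃ u v : R, r * u + b * v = 1)
    (hsc : ∃ u v : R, s * u + c * v = 1)
    (hrsu : ∃ u v : R, r * u + s * v = 1) :
    ∃ e : R ⧸ Ideal.span {a}, IsIdempotentElem e ∧
      (∃ x : R ⧸ Ideal.span {a}, e = Ideal.Quotient.mk (Ideal.span {a}) b * x) ∧
      (∃ y : R ⧸ Ideal.span {a}, 1 - e = Ideal.Quotient.mk (Ideal.span {a}) c * y) :=
  stmt_8_general a b c r s hrs hrb hsc hrsu
end

section
/- Let R be a commutative Bézout domain and a ∈ R \ {0} such that R/aR is a clean ring. Then for each pair (b,c) ∈ R² with aR + bR + cR = R there exists a factorization a = r·s with rR + bR = R, sR + cR = R, and rR + sR = R. -/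
/-!
Write `1 = (a u + c w) + b v`. In the clean ring `R/aR` the images of `(a, c)` and `(a, b)` are
comaximal, and cleanness turns such a pair into an idempotent `f ∈ (a, c)/aR` with
`1 - f ∈ (a, b)/aR`. A lift `E` of `f` satisfies `E (1 - E) ∈ aR`, so the comaximal ideals
`(a, E)` and `(a, 1 - E)` multiply to `aR`. In a Bézout domain they are principal, `(r)` and `(s)`,
and after adjusting `r` by a unit `a = r s`. Now `E ∈ (r)` and `1 - E ∈ (a, b) ⊆ (r, b)` give
`(r, b) = R`; symmetrically `(s, c) = R`, and `E + (1 - E) = 1` gives `(r, s) = R`.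
-/

open Ideal

theorem exists_isIdempotentElem_mem_one_sub_mem_of_sup_eq_top {S : Type*} [CommRing S]
    (hclean : ∀ x : S, ∃ u e : S, IsUnit u ∧ IsIdempotentElem e ∧ x = u + e)
    {I J : Ideal S} (hIJ : I ⊔ J = ⊤) :
    ∃ f : S, IsIdempotentElem f ∧ f ∈ I ∧ 1 - f ∈ J := by
  obtain ⟨x, hx, y, hy, hxy⟩ := isCoprime_iff_exists.mp (isCoprime_iff_sup_eq.mpr hIJ)
  obtain ⟨_, e, ⟨U, rfl⟩, he, rfl⟩ := hclean x
  refine ⟨1 - e, he.one_sub, ?_, ?_⟩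
  · have : 1 - e = ↑U⁻¹ * (1 - e) * (↑U + e) := by
      linear_combination (e - 1) * Units.inv_mul U + ↑U⁻¹ * he.eq
    rw [this]
    exact I.mul_mem_left _ hx
  · have : e = -↑U⁻¹ * e * y := by
      linear_combination (↑U⁻¹ * e) * hxy - e * Units.inv_mul U - ↑U⁻¹ * he.eq
    rw [sub_sub_cancel, this]
    exact J.mul_mem_left _ hy

theorem exists_mem_one_sub_mem_of_quotient_clean {R : Type*} [CommRing R] {I J K : Ideal R}
    (hclean : ∀ x : R ⧸ I, ∃ u e : R ⧸ I, IsUnit u ∧ IsIdempotentElem e ∧ x = u + e)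
    (hIJ : I ≤ J) (hIK : I ≤ K) (hJK : J ⊔ K = ⊤) :
    ∃ E ∈ J, 1 - E ∈ K ∧ E * (1 - E) ∈ I := by
  obtain ⟨f, hf, hfJ, hfK⟩ := exists_isIdempotentElem_mem_one_sub_mem_of_sup_eq_top hclean
    (I := J.map (Ideal.Quotient.mk I)) (J := K.map (Ideal.Quotient.mk I))
    (by rw [← Ideal.map_sup, hJK, Ideal.map_top])
  obtain ⟨E, rfl⟩ := Ideal.Quotient.mk_surjective f
  refine ⟨E, (mem_quotient_iff_mem hIJ).mp hfJ, (mem_quotient_iff_mem hIK).mp ?_, ?_⟩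
  · simpa using hfK
  · rw [← Quotient.eq_zero_iff_mem, map_mul, map_sub, map_one]
    exact hf.mul_one_sub_self

theorem span_pair_mul_span_pair_one_sub {R : Type*} [CommRing R] {a E : R}
    (hE : E * (1 - E) ∈ span {a}) : span {a, E} * span {a, 1 - E} = span {a} := by
  have hcop : span {a, E} ⊔ span {a, 1 - E} = ⊤ :=
    isCoprime_iff_sup_eq.mp <| isCoprime_iff_exists.mpr
      ⟨E, subset_span (by simp), 1 - E, subset_span (by simp), add_sub_cancel E 1⟩
  refine le_antisymm ?_ ?_
  · rw [span_pair_mul_span_pair, span_le]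
    simp [Set.insert_subset_iff, mem_span_singleton, hE]
  · rw [mul_eq_inf_of_coprime hcop]
    exact le_inf (span_mono (by simp)) (span_mono (by simp))

theorem exists_eq_mul_of_span_mul_span {R : Type*} [CommRing R] [IsDomain R] {a r₀ s : R}
    (h : span {r₀} * span {s} = span {a}) : ∃ r, a = r * s ∧ span {r} = span {r₀} := by
  obtain ⟨u, hu⟩ := span_singleton_eq_span_singleton.mp <|
    (span_singleton_mul_span_singleton r₀ s).symm.trans h
  exact ⟨r₀ * u, by rw [← hu]; ring, span_singleton_mul_right_unit u.isUnit r₀⟩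

theorem isCoprime_of_span_singleton_eq_span_pair {R : Type*} [CommRing R] {r x y E : R}
    (hr : span {r} = span {x, E}) (hE : 1 - E ∈ span {x, y}) : IsCoprime r y := by
  obtain ⟨p, q, hpq⟩ := mem_span_pair.mp hE
  obtain ⟨t, ht⟩ := mem_span_singleton.mp (hr ▸ subset_span (by simp) : x ∈ span {r})
  obtain ⟨t', ht'⟩ := mem_span_singleton.mp (hr ▸ subset_span (by simp) : E ∈ span {r})
  exact ⟨p * t + t', q, by linear_combination hpq - p * ht - ht'⟩

theorem IsCoprime.exists_mul_add_mul_eq_one {R : Type*} [CommRing R] {x y : R}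
    (h : IsCoprime x y) : ∃ u v : R, x * u + y * v = 1 :=
  let ⟨u, v, huv⟩ := h
  ⟨u, v, by linear_combination huv⟩

theorem stmt_9_general {R : Type*} [CommRing R] [IsDomain R]
    (hBez : ∀ x y : R, ∃ d : R, Ideal.span {x, y} = Ideal.span {d})
    (a : R)
    (hclean : ∀ x : R ⧸ Ideal.span {a}, ∃ u e : R ⧸ Ideal.span {a},
      IsUnit u ∧ IsIdempotentElem e ∧ x = u + e) :
    ∀ b c : R, (∃ u v w : R, a * u + b * v + c * w = 1) →
      ∃ r s : R, a = r * s ∧ (∃ u v : R, r * u + b * v = 1) ∧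
        (∃ u v : R, s * u + c * v = 1) ∧ (∃ u v : R, r * u + s * v = 1) := by
  rintro b c ⟨u, v, w, huvw⟩
  have hsup : span {a, c} ⊔ span {a, b} = ⊤ := by
    rw [eq_top_iff_one, ← huvw, add_right_comm]
    exact Submodule.add_mem_sup (mem_span_pair.mpr ⟨u, w, by ring⟩)
      (mem_span_pair.mpr ⟨0, v, by ring⟩)
  obtain ⟨E, hEc, hEb, hEE⟩ := exists_mem_one_sub_mem_of_quotient_clean hclean
    (span_mono (by simp)) (span_mono (by simp)) hsup
  obtain ⟨r₀, hr₀⟩ := hBez a E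
  obtain ⟨s, hs⟩ := hBez a (1 - E)
  have hmul : span {r₀} * span {s} = span {a} := by
    rw [← hr₀, ← hs, span_pair_mul_span_pair_one_sub hEE]
  obtain ⟨r, har, hr⟩ := exists_eq_mul_of_span_mul_span hmul
  have hrE : span {r} = span {a, E} := hr.trans hr₀.symm
  have hEc' : 1 - (1 - E) ∈ span {a, c} := by rwa [sub_sub_cancel]
  have hEs : 1 - E ∈ span {a, s} :=
    span_mono (Set.subset_insert a {s}) (hs ▸ subset_span (by simp))
  exact ⟨r, s, har,
    (isCoprime_of_span_singleton_eq_span_pair hrE hEb).exists_mul_add_mul_eq_one,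
    (isCoprime_of_span_singleton_eq_span_pair hs.symm hEc').exists_mul_add_mul_eq_one,
    (isCoprime_of_span_singleton_eq_span_pair hrE hEs).exists_mul_add_mul_eq_one⟩

/-- Theorem 6: in a commutative Bézout domain, if `R/aR` is clean for a
nonzero `a`, then every pair `(b,c)` with `aR + bR + cR = R` yields a
factorization `a = r*s` with `rR + bR = R`, `sR + cR = R`, `rR + sR = R`. -/
theorem stmt_9 {R : Type*} [CommRing R] [IsDomain R]
    (hBez : ∀ x y : R, ∃ d : R, Ideal.span {x, y} = Ideal.span {d})
    (a : R) (ha : a ≠ 0)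
    (hclean : ∀ x : R ⧸ Ideal.span {a}, ∃ u e : R ⧸ Ideal.span {a},
      IsUnit u ∧ IsIdempotentElem e ∧ x = u + e) :
    ∀ b c : R, (∃ u v w : R, a * u + b * v + c * w = 1) →
      ∃ r s : R, a = r * s ∧ (∃ u v : R, r * u + b * v = 1) ∧
        (∃ u v : R, s * u + c * v = 1) ∧ (∃ u v : R, r * u + s * v = 1) :=
  stmt_9_general hBez a hclean
end

section
/- Let R be a Bézout ring. Then R has almost stable range 1 (two-sided version) if and only if for each triple (a,b,c) ∈ R³ with RaR + RbR + RcR = R and c ≠ 0, there exist λ, d ∈ R such that (λa + b)R + cR = dR and RdR = R. -/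
/-- A ring has almost stable range 1 in the two-sided sense. -/
def HasAlmostStableRange1 (R : Type*) [Ring R] : Prop :=
  ∀ a b c : R, c ≠ 0 →
    TwoSidedIdeal.span {a} ⊔ TwoSidedIdeal.span {b} ⊔ TwoSidedIdeal.span {c} = ⊤ →
    ∃ l : R, TwoSidedIdeal.span {l * a + b} ⊔ TwoSidedIdeal.span {c} = ⊤

/-!
If `xR + yR = dR`, then `d`, `x`, `y` each lie in the two-sided ideal generated by the other side,
so `RdR = RxR + RyR`. Thus `RdR = R` for a generator `d` of `(λa + b)R + cR` is exactly
`R(λa + b)R + RcR = R`, and right Bézout supplies the generator.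
-/

namespace TwoSidedIdeal

variable {R : Type*} [Ring R]

theorem span_singleton_le_iff_mem {x : R} {I : TwoSidedIdeal R} : span {x} ≤ I ↔ x ∈ I := by
  rw [span_le, Set.singleton_subset_iff, SetLike.mem_coe]

theorem span_singleton_eq_sup_of_rightSpan_eq {x y d : R}
    (h : {z : R | ∃ u v : R, z = x * u + y * v} = {z : R | ∃ u : R, z = d * u}) :
    span {d} = span {x} ⊔ span {y} := by
  have mem_span_d {z : R} (hz : ∃ u v : R, z = x * u + y * v) : z ∈ span {d} := by
    obtain ⟨u, rfl⟩ : z ∈ {z : R | ∃ u : R, z = d * u} := h ▸ hz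
    exact mul_mem_right _ _ _ (subset_span (Set.mem_singleton d))
  obtain ⟨u, v, hd⟩ : d ∈ {z : R | ∃ u v : R, z = x * u + y * v} :=
    h ▸ ⟨1, (mul_one d).symm⟩
  apply le_antisymm
  · rw [span_singleton_le_iff_mem, hd]
    exact add_mem _ (mem_sup_left (mul_mem_right _ _ _ (subset_span (Set.mem_singleton x))))
      (mem_sup_right (mul_mem_right _ _ _ (subset_span (Set.mem_singleton y))))
  · refine sup_le (span_singleton_le_iff_mem.2 (mem_span_d ⟨1, 0, ?_⟩))
      (span_singleton_le_iff_mem.2 (mem_span_d ⟨0, 1, ?_⟩)) <;> simp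

end TwoSidedIdeal

theorem stmt_10_general {R : Type*} [Ring R]
    (hrBez : ∀ a b : R, ∃ d : R,
      {x : R | ∃ u v : R, x = a * u + b * v} = {x : R | ∃ u : R, x = d * u}) :
    HasAlmostStableRange1 R ↔
      (∀ a b c : R, c ≠ 0 →
        TwoSidedIdeal.span {a} ⊔ TwoSidedIdeal.span {b} ⊔ TwoSidedIdeal.span {c} = ⊤ →
        ∃ l d : R,
          {x : R | ∃ u v : R, x = (l * a + b) * u + c * v} = {x : R | ∃ u : R, x = d * u} ∧
          TwoSidedIdeal.span {d} = (⊤ : TwoSidedIdeal R)) := by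
  constructor
  · intro H a b c hc habc
    obtain ⟨l, hl⟩ := H a b c hc habc
    obtain ⟨d, hd⟩ := hrBez (l * a + b) c
    exact ⟨l, d, hd, (TwoSidedIdeal.span_singleton_eq_sup_of_rightSpan_eq hd).trans hl⟩
  · intro H a b c hc habc
    obtain ⟨l, d, hd, hdR⟩ := H a b c hc habc
    exact ⟨l, (TwoSidedIdeal.span_singleton_eq_sup_of_rightSpan_eq hd).symm.trans hdR⟩

/-- Theorem 8: a Bézout ring has almost stable range 1 iff for each triple
`(a,b,c)` with `RaR + RbR + RcR = R` and `c ≠ 0` there are `λ, d` with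
`(λa + b)R + cR = dR` and `RdR = R`. -/
theorem stmt_10 {R : Type*} [Ring R] [Nontrivial R]
    (hrBez : ∀ a b : R, ∃ d : R,
      {x : R | ∃ u v : R, x = a * u + b * v} = {x : R | ∃ u : R, x = d * u})
    (hlBez : ∀ a b : R, ∃ d : R,
      {x : R | ∃ u v : R, x = u * a + v * b} = {x : R | ∃ u : R, x = u * d}) :
    HasAlmostStableRange1 R ↔
      (∀ a b c : R, c ≠ 0 →
        TwoSidedIdeal.span {a} ⊔ TwoSidedIdeal.span {b} ⊔ TwoSidedIdeal.span {c} = ⊤ →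
        ∃ l d : R,
          {x : R | ∃ u v : R, x = (l * a + b) * u + c * v} = {x : R | ∃ u : R, x = d * u} ∧
          TwoSidedIdeal.span {d} = (⊤ : TwoSidedIdeal R)) :=
  stmt_10_general hrBez
end

section
/- Every Bézout ring of stable range 1 has almost stable range 1 (in the two-sided sense). -/
/-!
Left Bézout gives `Ra + Rb = Rd` with `a = a₁d`, `b = b₁d` and `d = ua + vb`. Since
`v b₁ + (1 - v b₁) = 1`, left stable range 1 yields a unit `w = b₁ + l (1 - v b₁)`, and
`w d = b + l (d - v b) = (l u) a + b`. Hence `λ := l u` makes `R(λa + b) = Rd` contain `a` and `b`,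
so the two-sided ideal of `λa + b` together with that of `c` is everything.
-/

section StableRange

def LeftStableRangeOne (R : Type*) [Ring R] : Prop :=
  ∀ a b : R, (∃ u v : R, u * a + v * b = 1) → ∃ l : R, IsUnit (a + l * b)

variable {R : Type*} [Ring R]

theorem LeftStableRangeOne.exists_unit_mul_eq_mul_add (hR : LeftStableRangeOne R)
    {a b d u v b₁ : R} (hd : d = u * a + v * b) (hb : b = b₁ * d) :
    ∃ l : R, ∃ w : Rˣ, (w : R) * d = l * a + b := by
  obtain ⟨l, w, hw⟩ := hR b₁ (1 - v * b₁) ⟨v, 1, by noncomm_ring⟩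
  refine ⟨l * u, w, ?_⟩
  calc (w : R) * d = b₁ * d + l * (d - v * (b₁ * d)) := by rw [hw]; noncomm_ring
    _ = l * u * a + b := by rw [← hb, hd]; noncomm_ring

theorem LeftStableRangeOne.exists_span_sup_span_le (hR : LeftStableRangeOne R)
    {a b d u v a₁ b₁ : R} (hd : d = u * a + v * b) (ha : a = a₁ * d) (hb : b = b₁ * d) :
    ∃ l : R, TwoSidedIdeal.span {a} ⊔ TwoSidedIdeal.span {b} ≤ TwoSidedIdeal.span {l * a + b} := by
  obtain ⟨l, w, hw⟩ := hR.exists_unit_mul_eq_mul_add hd hb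
  set I := TwoSidedIdeal.span {l * a + b}
  have hdI : d ∈ I := by
    have : d = (↑w⁻¹ : R) * (l * a + b) := by rw [← hw, ← mul_assoc, w.inv_mul, one_mul]
    rw [this]
    exact I.mul_mem_left _ _ (TwoSidedIdeal.subset_span rfl)
  have haI : a ∈ I := by simpa only [← ha] using I.mul_mem_left a₁ d hdI
  have hbI : b ∈ I := by simpa only [← hb] using I.mul_mem_left b₁ d hdI
  exact ⟨l, sup_le (TwoSidedIdeal.span_le.mpr (Set.singleton_subset_iff.mpr haI))
    (TwoSidedIdeal.span_le.mpr (Set.singleton_subset_iff.mpr hbI))⟩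

end StableRange

theorem stmt_13_general {R : Type*} [Ring R]
    (hlBez : ∀ a b : R, ∃ d : R,
      {x : R | ∃ u v : R, x = u * a + v * b} = {x : R | ∃ u : R, x = u * d})
    (hlSR1 : ∀ a b : R, (∃ u v : R, u * a + v * b = 1) →
      ∃ l : R, IsUnit (a + l * b)) :
    ∀ a b c : R, c ≠ 0 →
      TwoSidedIdeal.span {a} ⊔ TwoSidedIdeal.span {b} ⊔ TwoSidedIdeal.span {c} = ⊤ →
      ∃ l : R, TwoSidedIdeal.span {l * a + b} ⊔ TwoSidedIdeal.span {c} = ⊤ := by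
  intro a b c _ htop
  obtain ⟨d, hd⟩ := hlBez a b
  obtain ⟨u, v, hduv⟩ := (Set.ext_iff.mp hd d).mpr ⟨1, (one_mul d).symm⟩
  obtain ⟨a₁, ha⟩ := (Set.ext_iff.mp hd a).mp ⟨1, 0, by noncomm_ring⟩
  obtain ⟨b₁, hb⟩ := (Set.ext_iff.mp hd b).mp ⟨0, 1, by noncomm_ring⟩
  obtain ⟨l, hl⟩ := LeftStableRangeOne.exists_span_sup_span_le hlSR1 hduv ha hb
  exact ⟨l, eq_top_iff.mpr (htop ▸ sup_le_sup_right hl _)⟩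

/-- Theorem 10 (second part): every Bézout ring of stable range 1 has almost
stable range 1 in the two-sided sense. -/
theorem stmt_13 {R : Type*} [Ring R] [Nontrivial R]
    (hrBez : ∀ a b : R, ∃ d : R,
      {x : R | ∃ u v : R, x = a * u + b * v} = {x : R | ∃ u : R, x = d * u})
    (hlBez : ∀ a b : R, ∃ d : R,
      {x : R | ∃ u v : R, x = u * a + v * b} = {x : R | ∃ u : R, x = u * d})
    (hrSR1 : ∀ a b : R, (∃ u v : R, a * u + b * v = 1) →
      ∃ l : R, IsUnit (a + b * l))
    (hlSR1 : ∀ a b : R, (∃ u v : R, u * a + v * b = 1) →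
      ∃ l : R, IsUnit (a + l * b)) :
    ∀ a b c : R, c ≠ 0 →
      TwoSidedIdeal.span {a} ⊔ TwoSidedIdeal.span {b} ⊔ TwoSidedIdeal.span {c} = ⊤ →
      ∃ l : R, TwoSidedIdeal.span {l * a + b} ⊔ TwoSidedIdeal.span {c} = ⊤ :=
  stmt_13_general hlBez hlSR1
end

section
/- Let R be a Hermite ring of almost stable range 1. If RaR + RbR + RcR = R, then there exist P, Q ∈ GL₂(R) such that P·[[a,0],[b,c]]·Q = [[z,0],[*,*]], i.e. the (1,2)-entry is 0 and the (1,1)-entry z satisfies RzR = R. -/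
open TwoSidedIdeal in
private lemma span_singleton_le_of_mem {R : Type*} [Ring R] {x y : R}
    (h : x ∈ TwoSidedIdeal.span {y}) :
    TwoSidedIdeal.span {x} ≤ TwoSidedIdeal.span {y} := fun _ hz =>
  TwoSidedIdeal.mem_span_iff.mp hz _ (Set.singleton_subset_iff.mpr h)

private lemma mul_right_mem_span {R : Type*} [Ring R] (x r : R) :
    x * r ∈ TwoSidedIdeal.span {x} :=
  TwoSidedIdeal.mul_mem_right _ _ _ (TwoSidedIdeal.subset_span rfl)

/-- Theorem 12: let `R` be a Hermite ring of (two-sided) almost stable range 1.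
If `RaR + RbR + RcR = R`, then there are invertible `2×2` matrices `P, Q` such
that `P ⬝ [[a,0],[b,c]] ⬝ Q = [[z,0],[*,*]]` with `RzR = R`. -/
theorem stmt_15 {R : Type*} [Ring R] [Nontrivial R]
    (hHermiteRow : ∀ a b : R, ∃ P : Matrix (Fin 2) (Fin 2) R, IsUnit P ∧
      ∃ c : R, Matrix.of ![![a, b]] * P = Matrix.of ![![c, 0]])
    (hHermiteCol : ∀ a b : R, ∃ Q : Matrix (Fin 2) (Fin 2) R, IsUnit Q ∧
      ∃ d : R, Q * Matrix.of ![![a], ![b]] = Matrix.of ![![d], ![0]])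
    (hASR1 : ∀ a b c : R, c ≠ 0 →
      TwoSidedIdeal.span {a} ⊔ TwoSidedIdeal.span {b} ⊔ TwoSidedIdeal.span {c} = ⊤ →
      ∃ l : R, TwoSidedIdeal.span {l * a + b} ⊔ TwoSidedIdeal.span {c} = ⊤)
    (a b c : R)
    (h : TwoSidedIdeal.span {a} ⊔ TwoSidedIdeal.span {b} ⊔ TwoSidedIdeal.span {c}
      = (⊤ : TwoSidedIdeal R)) :
    ∃ P Q : Matrix (Fin 2) (Fin 2) R, IsUnit P ∧ IsUnit Q ∧
      (P * Matrix.of ![![a, 0], ![b, c]] * Q) 0 1 = 0 ∧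
      TwoSidedIdeal.span {(P * Matrix.of ![![a, 0], ![b, c]] * Q) 0 0}
        = (⊤ : TwoSidedIdeal R) := by
  by_cases hc : c = 0
  · -- use a column transformation
    obtain ⟨P, hP, d, hd⟩ := hHermiteCol a b
    refine ⟨P, 1, hP, isUnit_one, ?_, ?_⟩
    · simp [Matrix.mul_apply, Fin.sum_univ_two, hc]
    · have hd00 : P 0 0 * a + P 0 1 * b = d := by
        have := congrFun (congrFun hd 0) 0
        simpa [Matrix.mul_apply, Fin.sum_univ_two] using this
      have e00 : (P * Matrix.of ![![a, 0], ![b, c]] * (1 : Matrix (Fin 2) (Fin 2) R)) 0 0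
          = d := by
        simp [Matrix.mul_apply, Fin.sum_univ_two, hd00]
      rw [e00]
      -- a and b lie in span {d}
      obtain ⟨Pi, hPPi, hPiP⟩ := isUnit_iff_exists.mp hP
      have hinv : Pi * Matrix.of ![![d], ![0]] = Matrix.of ![![a], ![b]] := by
        rw [← hd, ← Matrix.mul_assoc, hPiP, Matrix.one_mul]
      have ha : a = Pi 0 0 * d := by
        have := congrFun (congrFun hinv 0) 0
        simpa [Matrix.mul_apply, Fin.sum_univ_two] using this.symm
      have hb : b = Pi 1 0 * d := by
        have := congrFun (congrFun hinv 1) 0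
        simpa [Matrix.mul_apply, Fin.sum_univ_two] using this.symm
      have hmem : ∀ x r : R, x = r * d → x ∈ TwoSidedIdeal.span {d} := by
        intro x r hx
        rw [hx]
        exact TwoSidedIdeal.mul_mem_left _ _ _ (TwoSidedIdeal.subset_span rfl)
      refine le_antisymm le_top ?_
      rw [← h]
      refine sup_le (sup_le ?_ ?_) ?_
      · exact span_singleton_le_of_mem (hmem a _ ha)
      · exact span_singleton_le_of_mem (hmem b _ hb)
      · rw [hc]
        exact span_singleton_le_of_mem (TwoSidedIdeal.zero_mem _)
  · obtain ⟨l, hl⟩ := hASR1 a b c hc h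
    obtain ⟨Q, hQ, z, hz⟩ := hHermiteRow (l * a + b) c
    set P : Matrix (Fin 2) (Fin 2) R := Matrix.of ![![l, 1], ![1, 0]] with hPdef
    have hP : IsUnit P := by
      apply isUnit_iff_exists.mpr
      refine ⟨Matrix.of ![![0, 1], ![1, -l]], ?_, ?_⟩ <;>
      · ext i j
        fin_cases i <;> fin_cases j <;>
          simp [hPdef, Matrix.mul_apply, Fin.sum_univ_two, Matrix.one_apply]
    have hrow0 : (l * a + b) * Q 0 0 + c * Q 1 0 = z := by
      have := congrFun (congrFun hz 0) 0
      simpa [Matrix.mul_apply, Fin.sum_univ_two] using this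
    have hrow1 : (l * a + b) * Q 0 1 + c * Q 1 1 = 0 := by
      have := congrFun (congrFun hz 0) 1
      simpa [Matrix.mul_apply, Fin.sum_univ_two] using this
    refine ⟨P, Q, hP, hQ, ?_, ?_⟩
    · have : (P * Matrix.of ![![a, 0], ![b, c]] * Q) 0 1
          = (l * a + b) * Q 0 1 + c * Q 1 1 := by
        simp [hPdef, Matrix.mul_apply, Fin.sum_univ_two]
      rw [this, hrow1]
    · have e00 : (P * Matrix.of ![![a, 0], ![b, c]] * Q) 0 0 = z := by
        rw [← hrow0]
        simp [hPdef, Matrix.mul_apply, Fin.sum_univ_two]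
      rw [e00]
      -- l*a+b and c lie in span {z}
      obtain ⟨Qi, hQQi, hQiQ⟩ := isUnit_iff_exists.mp hQ
      have hinv : Matrix.of ![![z, 0]] * Qi = Matrix.of ![![l * a + b, c]] := by
        rw [← hz, Matrix.mul_assoc, hQQi, Matrix.mul_one]
      have hx : l * a + b = z * Qi 0 0 := by
        have := congrFun (congrFun hinv 0) 0
        simpa [Matrix.mul_apply, Fin.sum_univ_two] using this.symm
      have hy : c = z * Qi 0 1 := by
        have := congrFun (congrFun hinv 0) 1
        simpa [Matrix.mul_apply, Fin.sum_univ_two] using this.symm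
      refine le_antisymm le_top ?_
      rw [← hl]
      refine sup_le ?_ ?_
      · exact span_singleton_le_of_mem (hx ▸ mul_right_mem_span z _)
      · exact span_singleton_le_of_mem (hy ▸ mul_right_mem_span z _)
end

section
/- Let R be a commutative Bézout domain and a a nonzero nonunit of R. If R/aR is clean then a is an element of almost stable range 1: for each (b,c) ∈ R² with aR + bR + cR = R there exists λ ∈ R such that aR + (b + cλ)R = R. -/
/-!
Modulo `a` the hypothesis becomes `b̄ v̄ + c̄ w̄ = 1` in the clean ring `R/aR`, and clean rings have
stable range 1, so some `b̄ + c̄ λ̄` is a unit of `R/aR`; lifting `λ̄` and the inverse gives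
`aR + (b + cλ)R = R`. For stable range 1, write `x s = u + e` with `u` a unit and `e` idempotent:
on the corner `(1 - e)S` the element `x` is already a unit, while on `eS` the element `y` is, and
`λ = -t e u⁻¹ (1 - x)` corrects `x` to `1` on `eS` without disturbing `(1 - e)S`.
-/

def IsCleanRing (S : Type*) [CommRing S] : Prop :=
  ∀ x : S, ∃ u e : S, IsUnit u ∧ IsIdempotentElem e ∧ x = u + e

theorem IsCleanRing.exists_isUnit_add_mul {S : Type*} [CommRing S] (hS : IsCleanRing S)
    {x y s t : S} (h : x * s + y * t = 1) : ∃ l : S, IsUnit (x + y * l) := by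
  obtain ⟨_, e, ⟨U, rfl⟩, he, hxs⟩ := hS (x * s)
  have hee : e * e = e := he
  have hU : (U : S) * ↑U⁻¹ = 1 := U.mul_inv
  set l := -(t * e * ↑U⁻¹) * (1 - x)
  have hyte : y * t * e = -(U * e) := by linear_combination e * h - e * hxs - hee
  have corner_e : (x + y * l) * e = e := by
    linear_combination (-(e * ↑U⁻¹) * (1 - x)) * hyte + (↑U * ↑U⁻¹ * (1 - x)) * hee
      + (e * (1 - x)) * hU
  have corner_one_sub_e : (x + y * l) * (1 - e) = x * (1 - e) := by
    linear_combination (y * t * ↑U⁻¹ * (1 - x)) * hee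
  have hx_inv : x * (s * ↑U⁻¹) * (1 - e) = 1 - e := by
    linear_combination (↑U⁻¹ * (1 - e)) * hxs + (1 - e) * hU - ↑U⁻¹ * hee
  refine ⟨l, IsUnit.of_mul_eq_one (e + s * ↑U⁻¹ * (1 - e)) ?_⟩
  calc (x + y * l) * (e + s * ↑U⁻¹ * (1 - e))
      = (x + y * l) * e + (x + y * l) * (1 - e) * (s * ↑U⁻¹ * (1 - e)) := by
        linear_combination (-(x + y * l) * s * ↑U⁻¹) * hee
    _ = e + x * (s * ↑U⁻¹) * (1 - e) * (1 - e) := by rw [corner_e, corner_one_sub_e]; ring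
    _ = 1 := by rw [hx_inv]; linear_combination hee

theorem exists_mul_add_mul_eq_one_of_isUnit_mk {R : Type*} [CommRing R] {a z : R}
    (hz : IsUnit (Ideal.Quotient.mk (Ideal.span {a}) z)) : ∃ u v : R, a * u + z * v = 1 := by
  obtain ⟨w, hw⟩ := Ideal.Quotient.mk_surjective hz.unit⁻¹.val
  have hzw : Ideal.Quotient.mk (Ideal.span {a}) (z * w) = 1 := by
    rw [map_mul, hw, IsUnit.mul_val_inv]
  obtain ⟨u, hu⟩ : a ∣ 1 - z * w := by
    rw [← Ideal.mem_span_singleton, ← Ideal.Quotient.eq_zero_iff_mem, map_sub, map_one, hzw,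
      sub_self]
  exact ⟨u, w, by linear_combination -hu⟩

theorem stmt_17_general {R : Type*} [CommRing R]
    (a : R)
    (hclean : ∀ x : R ⧸ Ideal.span {a}, ∃ u e : R ⧸ Ideal.span {a},
      IsUnit u ∧ IsIdempotentElem e ∧ x = u + e) :
    ∀ b c : R, (∃ u v w : R, a * u + b * v + c * w = 1) →
      ∃ l : R, ∃ u v : R, a * u + (b + c * l) * v = 1 := by
  rintro b c ⟨u, v, w, h⟩
  set π := Ideal.Quotient.mk (Ideal.span {a})
  have hπa : π a = 0 := Ideal.Quotient.eq_zero_iff_mem.mpr (Ideal.mem_span_singleton_self a)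
  have h_mod_a : π b * π v + π c * π w = 1 := by
    simpa only [map_add, map_mul, map_one, hπa, zero_mul, zero_add] using congrArg π h
  obtain ⟨l', hl'⟩ := IsCleanRing.exists_isUnit_add_mul hclean h_mod_a
  obtain ⟨l, rfl⟩ := Ideal.Quotient.mk_surjective l'
  refine ⟨l, exists_mul_add_mul_eq_one_of_isUnit_mk ?_⟩
  simpa only [map_add, map_mul] using hl'

/-- In a commutative Bézout domain, if `a` is a nonzero nonunit with `R/aR`
clean, then `a` is an element of almost stable range 1. -/
theorem stmt_17 {R : Type*} [CommRing R] [IsDomain R]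
    (hBez : ∀ x y : R, ∃ d : R, Ideal.span {x, y} = Ideal.span {d})
    (a : R) (ha : a ≠ 0) (hnu : ¬IsUnit a)
    (hclean : ∀ x : R ⧸ Ideal.span {a}, ∃ u e : R ⧸ Ideal.span {a},
      IsUnit u ∧ IsIdempotentElem e ∧ x = u + e) :
    ∀ b c : R, (∃ u v w : R, a * u + b * v + c * w = 1) →
      ∃ l : R, ∃ u v : R, a * u + (b + c * l) * v = 1 :=
  stmt_17_general a hclean
end
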